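/- arXiv:1705.05110 — 5 statements merged into one kernel-verified Lean document; each statement's English description precedes it below -/
import Mathlib

section
/- Let K be a CM field with totally real subfield K₀ and g = [K₀:ℚ], and let Φ̄ be a CM half-set of embeddings of K. Suppose x ∈ K and φ ∈ ℂ \ ℝ satisfy ρ(x) = φ for every ρ ∈ Φ̄. Then the minimal polynomial of φ over ℚ has degree 2 (so ℚ(φ) is a quadratic imaginary field), and the minimal polynomial of x over ℚ also has degree 2 and is equal to that of φ. -/
/-!
The embeddings of `K` outside `Φ` are the conjugates of those in `Φ`, so every embedding sends
`x` to `φ` or to `conj φ`. The values of the embeddings at `x` are exactly the complex roots of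
its (separable) minimal polynomial, so that polynomial has the two distinct roots `φ ≠ conj φ`,
hence degree 2; and `minpoly ℚ x = minpoly ℚ (ρ x) = minpoly ℚ φ` for any `ρ ∈ Φ`.
-/

namespace NumberField

open ComplexConjugate

theorem natDegree_minpoly_eq_ncard_range_embeddings {K : Type*} [Field K] [NumberField K]
    (x : K) :
    (minpoly ℚ x).natDegree = (Set.range fun σ : K →+* ℂ => σ x).ncard := by
  have hsep : (minpoly ℚ x).Separable :=
    (minpoly.irreducible (Algebra.IsIntegral.isIntegral x)).separable
  rw [← Polynomial.card_rootSet_eq_natDegree hsep (IsAlgClosed.splits (k := ℂ) _),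
    ← Nat.card_eq_fintype_card, Nat.card_coe_set_eq,
    Embeddings.range_eval_eq_rootSet_minpoly K ℂ x]

theorem conj_comp_mem_of_not_mem {K : Type*} [Semiring K] {Φ : Set (K →+* ℂ)}
    (hΦ : ∀ ρ : K →+* ℂ, ρ ∈ Φ ↔ (starRingEnd ℂ).comp ρ ∉ Φ) {σ : K →+* ℂ} (hσ : σ ∉ Φ) :
    (starRingEnd ℂ).comp σ ∈ Φ :=
  not_not.mp (mt (hΦ σ).mpr hσ)

section HalfSet

variable {K : Type*} [Field K] [NumberField K] {Φ : Set (K →+* ℂ)}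
  (hΦ : ∀ ρ : K →+* ℂ, ρ ∈ Φ ↔ (starRingEnd ℂ).comp ρ ∉ Φ)
include hΦ

theorem exists_mem_of_forall_mem_iff_conj_comp_not_mem : ∃ ρ, ρ ∈ Φ := by
  obtain ⟨σ⟩ : Nonempty (K →+* ℂ) := inferInstance
  by_cases hσ : σ ∈ Φ
  · exact ⟨σ, hσ⟩
  · exact ⟨_, conj_comp_mem_of_not_mem hΦ hσ⟩

theorem range_embeddings_eq_pair_conj {x : K} {φ : ℂ} (hx : ∀ ρ ∈ Φ, ρ x = φ) :
    (Set.range fun σ : K →+* ℂ => σ x) = {φ, conj φ} := by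
  obtain ⟨ρ, hρ⟩ := exists_mem_of_forall_mem_iff_conj_comp_not_mem hΦ
  ext z
  simp only [Set.mem_range, Set.mem_insert_iff, Set.mem_singleton_iff]
  constructor
  · rintro ⟨σ, rfl⟩
    by_cases hσ : σ ∈ Φ
    · exact Or.inl (hx σ hσ)
    · right
      rw [← hx _ (conj_comp_mem_of_not_mem hΦ hσ), RingHom.comp_apply, Complex.conj_conj]
  · rintro (rfl | rfl)
    · exact ⟨ρ, hx ρ hρ⟩
    · exact ⟨(starRingEnd ℂ).comp ρ, by simp [hx ρ hρ]⟩

end HalfSet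

end NumberField

theorem stmt0_general (K : Type*) [Field K] [NumberField K]
    -- Φ is a CM half-set: it contains exactly one of each conjugate pair of embeddings
    (Φ : Finset (K →+* ℂ))
    (hΦ : ∀ ρ : K →+* ℂ, ρ ∈ Φ ↔ (starRingEnd ℂ).comp ρ ∉ Φ)
    (x : K) (φ : ℂ) (hφ : φ.im ≠ 0)
    (hx : ∀ ρ ∈ Φ, ρ x = φ) :
    (minpoly ℚ φ).natDegree = 2 ∧ (minpoly ℚ x).natDegree = 2 ∧
      minpoly ℚ x = minpoly ℚ φ := by
  have hφ_ne_conj : φ ≠ starRingEnd ℂ φ := fun h => hφ (Complex.conj_eq_iff_im.mp h.symm)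
  have hdeg : (minpoly ℚ x).natDegree = 2 := by
    rw [NumberField.natDegree_minpoly_eq_ncard_range_embeddings,
      NumberField.range_embeddings_eq_pair_conj (Φ := (Φ : Set (K →+* ℂ))) hΦ hx,
      Set.ncard_pair hφ_ne_conj]
  obtain ⟨ρ, hρ⟩ :=
    NumberField.exists_mem_of_forall_mem_iff_conj_comp_not_mem (Φ := (Φ : Set (K →+* ℂ))) hΦ
  have hmin : minpoly ℚ x = minpoly ℚ φ := by
    rw [← hx ρ hρ]
    exact (minpoly.algHom_eq ρ.toRatAlgHom ρ.injective x).symm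
  exact ⟨hmin ▸ hdeg, hdeg, hmin⟩

/-- Let `K` be a CM field with totally real subfield `K₀` and `g = [K₀:ℚ]`,
and let `Φ` be a CM half-set of embeddings of `K`.  Suppose `x ∈ K` and `φ ∈ ℂ \ ℝ` satisfy
`ρ(x) = φ` for every `ρ ∈ Φ`.  Then the minimal polynomial of `φ` over `ℚ` has degree 2
(so `ℚ(φ)` is a quadratic imaginary field), and the minimal polynomial of `x` over `ℚ`
also has degree 2 and is equal to that of `φ`. -/
theorem stmt0 (K₀ K : Type*) [Field K₀] [Field K] [NumberField K₀] [NumberField K]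
    [Algebra K₀ K]
    -- K₀ is totally real
    (htotreal : ∀ σ : K₀ →+* ℂ, ∀ a : K₀, (σ a).im = 0)
    -- [K : K₀] = 2
    (hdeg2 : Module.finrank K₀ K = 2)
    -- K is totally imaginary
    (htotim : ∀ ρ : K →+* ℂ, ∃ a : K, (ρ a).im ≠ 0)
    -- Φ is a CM half-set: it contains exactly one of each conjugate pair of embeddings
    (Φ : Finset (K →+* ℂ))
    (hΦ : ∀ ρ : K →+* ℂ, ρ ∈ Φ ↔ (starRingEnd ℂ).comp ρ ∉ Φ)
    (x : K) (φ : ℂ) (hφ : φ.im ≠ 0)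
    (hx : ∀ ρ ∈ Φ, ρ x = φ) :
    (minpoly ℚ φ).natDegree = 2 ∧ (minpoly ℚ x).natDegree = 2 ∧
      minpoly ℚ x = minpoly ℚ φ :=
  stmt0_general K Φ hΦ x φ hφ hx
end

section
/- Let K be a CM field with totally real subfield K₀ and g = [K₀:ℚ], and let Φ̄ be a CM half-set of embeddings of K. Suppose x ∈ K and φ ∈ ℂ \ ℝ satisfy ρ(x) = φ for every ρ ∈ Φ̄, and suppose P, Q ∈ K₀ satisfy x² = P·x + Q. Then P and Q lie in ℚ, with P = Tr_{K₀/ℚ}(P)/g and Q = Tr_{K₀/ℚ}(Q)/g, and moreover φ² = P·φ + Q holds in ℂ; in particular the fields ℚ(x) ⊆ K and ℚ(φ) ⊆ ℂ are isomorphic. -/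
/-!
Since `K₀` is totally real, every embedding `σ : K₀ → ℂ` extends to some `ρ ∈ Φ` (lift `σ` to `K`
and, if the lift is not in `Φ`, take its conjugate, which still restricts to `σ`). Applying `ρ` to
`x² = P x + Q` gives `φ² = σ(P) φ + σ(Q)`. As `σ(P), σ(Q)` are real and `1, φ` are linearly
independent over `ℝ`, the pair `(σ(P), σ(Q))` does not depend on `σ`. An element of `K₀` on which
all embeddings agree equals its trace, the sum of its conjugates, divided by `[K₀ : ℚ]`.
-/

open NumberField.ComplexEmbedding IntermediateField

theorem Complex.eq_and_eq_of_mul_add_eq_mul_add {φ a b c d : ℂ} (hφ : φ.im ≠ 0)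
    (ha : a.im = 0) (hb : b.im = 0) (hc : c.im = 0) (hd : d.im = 0)
    (h : a * φ + b = c * φ + d) : a = c ∧ b = d := by
  have him := congrArg Complex.im h
  simp only [Complex.add_im, Complex.mul_im, ha, hb, hc, hd, zero_mul, add_zero] at him
  have hac : a = c := Complex.ext (mul_right_cancel₀ hφ him) (ha.trans hc.symm)
  exact ⟨hac, add_left_cancel (hac ▸ h)⟩

theorem NumberField.algebraMap_trace_div_finrank_eq {F : Type*} [Field F] [NumberField F]
    {y : F} (σ₀ : F →+* ℂ) (hy : ∀ σ : F →+* ℂ, σ y = σ₀ y) :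
    algebraMap ℚ F (Algebra.trace ℚ F y / Module.finrank ℚ F) = y := by
  have htrace : (Algebra.trace ℚ F y : ℂ) = Module.finrank ℚ F * σ₀ y := by
    rw [← eq_ratCast (algebraMap ℚ ℂ), trace_eq_sum_embeddings ℂ,
      Finset.sum_congr rfl fun σ _ ↦ hy σ.toRingHom, Finset.sum_const, Finset.card_univ,
      AlgHom.card, nsmul_eq_mul]
  apply σ₀.injective
  rw [RingHom.map_rat_algebraMap, eq_ratCast, Rat.cast_div, htrace, Rat.cast_natCast,
    mul_div_cancel_left₀ _ (by exact_mod_cast Module.finrank_pos.ne')]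

noncomputable def IntermediateField.adjoinSimpleEquivMap {F K L : Type*} [Field F] [Field K]
    [Field L] [Algebra F K] [Algebra F L] (f : K →ₐ[F] L) (x : K) : F⟮x⟯ ≃ₐ[F] F⟮f x⟯ :=
  (F⟮x⟯.equivMap f).trans (equivOfEq (Set.image_singleton ▸ adjoin_map F {x} f))

section HalfSet

variable {K₀ K : Type*} [Field K₀] [Field K] [Algebra K₀ K] {Φ : Finset (K →+* ℂ)}

theorem mem_or_conjugate_mem (hΦ : ∀ ρ : K →+* ℂ, ρ ∈ Φ ↔ (starRingEnd ℂ).comp ρ ∉ Φ)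
    (ρ : K →+* ℂ) : ρ ∈ Φ ∨ conjugate ρ ∈ Φ :=
  or_iff_not_imp_right.mpr (hΦ ρ).mpr

theorem exists_mem_comp_algebraMap_eq [Algebra.IsAlgebraic K₀ K]
    (hΦ : ∀ ρ : K →+* ℂ, ρ ∈ Φ ↔ (starRingEnd ℂ).comp ρ ∉ Φ) {σ : K₀ →+* ℂ} (hσ : IsReal σ) :
    ∃ ρ ∈ Φ, ρ.comp (algebraMap K₀ K) = σ := by
  rcases mem_or_conjugate_mem hΦ (lift K σ) with h | h
  · exact ⟨_, h, lift_comp_algebraMap K σ⟩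
  · exact ⟨_, h, by rw [conjugate_comp, lift_comp_algebraMap]; exact isReal_iff.mp hσ⟩

theorem sq_eq_mul_add_of_forall_mem_eq [Algebra.IsAlgebraic K₀ K]
    (hΦ : ∀ ρ : K →+* ℂ, ρ ∈ Φ ↔ (starRingEnd ℂ).comp ρ ∉ Φ) {x : K} {φ : ℂ}
    (hx : ∀ ρ ∈ Φ, ρ x = φ) {P Q : K₀}
    (hPQ : x ^ 2 = algebraMap K₀ K P * x + algebraMap K₀ K Q) {σ : K₀ →+* ℂ} (hσ : IsReal σ) :
    φ ^ 2 = σ P * φ + σ Q := by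
  obtain ⟨ρ, hρ, rfl⟩ := exists_mem_comp_algebraMap_eq hΦ hσ
  simpa [hx ρ hρ] using congrArg ρ hPQ

end HalfSet

theorem stmt3_general (K₀ K : Type*) [Field K₀] [Field K] [NumberField K₀] [NumberField K]
    [Algebra K₀ K]
    -- K₀ is totally real
    (htotreal : ∀ σ : K₀ →+* ℂ, ∀ a : K₀, (σ a).im = 0)
    -- Φ is a CM half-set: it contains exactly one of each conjugate pair of embeddings
    (Φ : Finset (K →+* ℂ))
    (hΦ : ∀ ρ : K →+* ℂ, ρ ∈ Φ ↔ (starRingEnd ℂ).comp ρ ∉ Φ)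
    (x : K) (φ : ℂ) (hφ : φ.im ≠ 0)
    (hx : ∀ ρ ∈ Φ, ρ x = φ)
    (P Q : K₀)
    (hPQ : x ^ 2 = algebraMap K₀ K P * x + algebraMap K₀ K Q) :
    algebraMap ℚ K₀ (Algebra.trace ℚ K₀ P / (Module.finrank ℚ K₀ : ℚ)) = P ∧
    algebraMap ℚ K₀ (Algebra.trace ℚ K₀ Q / (Module.finrank ℚ K₀ : ℚ)) = Q ∧
    φ ^ 2 = ((Algebra.trace ℚ K₀ P / (Module.finrank ℚ K₀ : ℚ) : ℚ) : ℂ) * φ +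
        ((Algebra.trace ℚ K₀ Q / (Module.finrank ℚ K₀ : ℚ) : ℚ) : ℂ) ∧
    Nonempty ((IntermediateField.adjoin ℚ ({x} : Set K)) ≃+*
        (IntermediateField.adjoin ℚ ({φ} : Set ℂ))) := by
  have hreal (σ : K₀ →+* ℂ) : IsReal σ :=
    isReal_iff.mpr (RingHom.ext fun a ↦ Complex.conj_eq_iff_im.mpr (htotreal σ a))
  have hquad (σ : K₀ →+* ℂ) : φ ^ 2 = σ P * φ + σ Q :=
    sq_eq_mul_add_of_forall_mem_eq hΦ hx hPQ (hreal σ)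
  obtain ⟨σ₀⟩ : Nonempty (K₀ →+* ℂ) := inferInstance
  have hagree (σ : K₀ →+* ℂ) : σ P = σ₀ P ∧ σ Q = σ₀ Q :=
    Complex.eq_and_eq_of_mul_add_eq_mul_add hφ (htotreal σ P) (htotreal σ Q) (htotreal σ₀ P)
      (htotreal σ₀ Q) ((hquad σ).symm.trans (hquad σ₀))
  have hP := NumberField.algebraMap_trace_div_finrank_eq σ₀ fun σ ↦ (hagree σ).1
  have hQ := NumberField.algebraMap_trace_div_finrank_eq σ₀ fun σ ↦ (hagree σ).2
  obtain ⟨ρ, hρ, -⟩ := exists_mem_comp_algebraMap_eq hΦ (hreal σ₀)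
  refine ⟨hP, hQ, ?_, ?_⟩
  · have := hquad σ₀
    rwa [← hP, ← hQ, RingHom.map_rat_algebraMap, RingHom.map_rat_algebraMap, eq_ratCast,
      eq_ratCast] at this
  · exact hx ρ hρ ▸ ⟨(adjoinSimpleEquivMap ρ.toRatAlgHom x).toRingEquiv⟩

/-- Let `K` be a CM field with totally real subfield `K₀` and `g = [K₀:ℚ]`,
and let `Φ` be a CM half-set of embeddings of `K`.  Suppose `x ∈ K` and `φ ∈ ℂ \ ℝ`
satisfy `ρ(x) = φ` for every `ρ ∈ Φ`, and suppose `P, Q ∈ K₀` satisfy `x² = P·x + Q`.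
Then `P` and `Q` lie in `ℚ`, with `P = Tr_{K₀/ℚ}(P)/g` and `Q = Tr_{K₀/ℚ}(Q)/g`,
and moreover `φ² = P·φ + Q` holds in `ℂ`; in particular the fields `ℚ(x) ⊆ K` and
`ℚ(φ) ⊆ ℂ` are isomorphic. -/
theorem stmt3 (K₀ K : Type*) [Field K₀] [Field K] [NumberField K₀] [NumberField K]
    [Algebra K₀ K]
    -- K₀ is totally real
    (htotreal : ∀ σ : K₀ →+* ℂ, ∀ a : K₀, (σ a).im = 0)
    -- [K : K₀] = 2
    (hdeg2 : Module.finrank K₀ K = 2)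
    -- K is totally imaginary
    (htotim : ∀ ρ : K →+* ℂ, ∃ a : K, (ρ a).im ≠ 0)
    -- Φ is a CM half-set: it contains exactly one of each conjugate pair of embeddings
    (Φ : Finset (K →+* ℂ))
    (hΦ : ∀ ρ : K →+* ℂ, ρ ∈ Φ ↔ (starRingEnd ℂ).comp ρ ∉ Φ)
    (x : K) (φ : ℂ) (hφ : φ.im ≠ 0)
    (hx : ∀ ρ ∈ Φ, ρ x = φ)
    (P Q : K₀)
    (hPQ : x ^ 2 = algebraMap K₀ K P * x + algebraMap K₀ K Q) :
    algebraMap ℚ K₀ (Algebra.trace ℚ K₀ P / (Module.finrank ℚ K₀ : ℚ)) = P ∧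
    algebraMap ℚ K₀ (Algebra.trace ℚ K₀ Q / (Module.finrank ℚ K₀ : ℚ)) = Q ∧
    φ ^ 2 = ((Algebra.trace ℚ K₀ P / (Module.finrank ℚ K₀ : ℚ) : ℚ) : ℂ) * φ +
        ((Algebra.trace ℚ K₀ Q / (Module.finrank ℚ K₀ : ℚ) : ℚ) : ℂ) ∧
    Nonempty ((IntermediateField.adjoin ℚ ({x} : Set K)) ≃+*
        (IntermediateField.adjoin ℚ ({φ} : Set ℂ))) :=
  stmt3_general K₀ K htotreal Φ hΦ x φ hφ hx P Q hPQ
end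

section
/- Let d be a positive rational number that is not the square of a rational number, fix the real square root √d > 0, and let p, q ∈ ℚ. Set α = p + q√d ∈ ℝ and α' = p − q√d ∈ ℝ, and assume α is not the square of an element of the real quadratic field ℚ(√d) ⊂ ℝ. Let θ ∈ ℂ satisfy θ² = α and let K = ℚ(√d, θ) ⊂ ℂ, a degree-4 extension of ℚ. Then K is totally imaginary (no ring embedding K → ℂ has image contained in ℝ) if and only if both α < 0 and α' < 0. -/
/-!
If `α ≥ 0` then `θ` is real and `K ⊆ ℝ`. If `α < 0 ≤ α'`, then `q ≠ 0`, so `√d ∈ ℚ(θ)` and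
`K = ℚ(θ)`; since `[K : ℚ] = 4`, the minimal polynomial of `θ` is `(X² - α)(X² - α') ∈ ℚ[X]`,
whose real root `√α'` yields a real embedding. Conversely, every embedding sends `√d` to `±√d`,
hence `θ` to a square root of `α` or `α'`, which is not real when both are negative.
-/

open Polynomial IntermediateField Module

theorem Complex.im_eq_zero_iff_of_sq_eq_ofReal {z : ℂ} {a : ℝ} (h : z ^ 2 = a) :
    z.im = 0 ↔ 0 ≤ a := by
  have hre : z.re ^ 2 - z.im ^ 2 = a := by
    simpa [sq] using congrArg Complex.re h
  have him : z.re * z.im + z.im * z.re = 0 := by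
    simpa [sq] using congrArg Complex.im h
  constructor
  · intro h0
    nlinarith [sq_nonneg z.re]
  · intro ha
    by_contra h0
    have hre0 : z.re = 0 := (mul_eq_zero.1 (by linarith : z.re * z.im = 0)).resolve_right h0
    have : 0 < z.im ^ 2 := by positivity
    nlinarith

theorem Complex.im_eq_zero_of_mem_adjoin {S : Set ℂ} (hS : ∀ z ∈ S, z.im = 0) {z : ℂ}
    (hz : z ∈ adjoin ℚ S) : z.im = 0 := by
  have hle : adjoin ℚ S ≤ (Complex.ofRealAm.restrictScalars ℚ).fieldRange :=
    adjoin_le_iff.2 fun w hw => AlgHom.mem_fieldRange.2 ⟨w.re, Complex.ext rfl (hS w hw).symm⟩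
  obtain ⟨x, rfl⟩ := AlgHom.mem_fieldRange.1 (hle hz)
  exact Complex.ofReal_im x

theorem IntermediateField.adjoin_pair_eq_adjoin_simple {F E : Type*} [Field F] [Field E]
    [Algebra F E] {s θ : E} {p q : F} (hq : q ≠ 0)
    (hθ : θ ^ 2 = algebraMap F E p + algebraMap F E q * s) : adjoin F {s, θ} = F⟮θ⟯ := by
  have hθmem : θ ∈ F⟮θ⟯ := mem_adjoin_simple_self F θ
  have hs : s = (algebraMap F E q)⁻¹ * (θ ^ 2 - algebraMap F E p) := by
    rw [hθ, add_sub_cancel_left, inv_mul_cancel_left₀ ((_root_.map_ne_zero _).2 hq)]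
  have hsmem : s ∈ F⟮θ⟯ := by
    rw [hs]
    exact mul_mem (inv_mem (algebraMap_mem _ q))
      (sub_mem (pow_mem hθmem 2) (algebraMap_mem _ p))
  refine le_antisymm (adjoin_le_iff.2 ?_) (adjoin.mono F _ _ (by simp))
  rintro x (rfl | rfl)
  exacts [hsmem, hθmem]

theorem IntermediateField.nonempty_algHom_adjoin_of_aeval_eq_zero {F E L : Type*} [Field F]
    [Field E] [Field L] [Algebra F E] [Algebra F L] {θ : E} {g : F[X]} (hg : g.Monic)
    (hgθ : aeval θ g = 0) (hdeg : g.natDegree ≤ finrank F F⟮θ⟯) {r : L} (hr : aeval r g = 0) :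
    Nonempty (F⟮θ⟯ →ₐ[F] L) := by
  have hint : IsIntegral F θ := ⟨g, hg, by rwa [← aeval_def]⟩
  have hmin : g = minpoly F θ :=
    eq_of_monic_of_dvd_of_natDegree_le (minpoly.monic hint) hg (minpoly.dvd F θ hgθ)
      (hdeg.trans (adjoin.finrank hint).le)
  exact ⟨(algHomAdjoinIntegralEquiv F hint).symm ⟨r, mem_aroots.2 ⟨hmin ▸ hg.ne_zero, hmin ▸ hr⟩⟩⟩

theorem RingHom.map_sq_eq_or_of_sq_eq {L M : Type*} [DivisionRing L] [Field M] [CharZero M]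
    (ρ : L →+* M) {p q d : ℚ} {r : M} (hr : r ^ 2 = d) {s t : L} (hs : s ^ 2 = d)
    (ht : t ^ 2 = p + q * s) : ρ t ^ 2 = p + q * r ∨ ρ t ^ 2 = p - q * r := by
  have hρs : ρ s = r ∨ ρ s = -r := by
    rw [← sq_eq_sq_iff_eq_or_eq_neg, ← map_pow, hs, hr, map_ratCast]
  have hρt : ρ t ^ 2 = p + q * ρ s := by
    rw [← map_pow, ht, map_add, map_mul, map_ratCast, map_ratCast]
  rcases hρs with h | h
  · exact .inl (by rw [hρt, h])
  · exact .inr (by rw [hρt, h, mul_neg, sub_eq_add_neg])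

noncomputable def nestedSqrtPoly (p q d : ℚ) : ℚ[X] :=
  X ^ 4 - C (2 * p) * X ^ 2 + C (p ^ 2 - d * q ^ 2)

theorem nestedSqrtPoly_monic (p q d : ℚ) : (nestedSqrtPoly p q d).Monic := by
  unfold nestedSqrtPoly; monicity!

theorem nestedSqrtPoly_natDegree (p q d : ℚ) : (nestedSqrtPoly p q d).natDegree = 4 := by
  unfold nestedSqrtPoly; compute_degree!

theorem aeval_nestedSqrtPoly {A : Type*} [Field A] [CharZero A] {p q d : ℚ} {s : A}
    (hs : s ^ 2 = d) (x : A) :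
    aeval x (nestedSqrtPoly p q d) = (x ^ 2 - (p + q * s)) * (x ^ 2 - (p - q * s)) := by
  simp only [nestedSqrtPoly, map_add, map_sub, map_mul, map_pow, aeval_X, aeval_C,
    eq_ratCast, Rat.cast_ofNat]
  rw [← hs]
  ring

theorem Complex.ofReal_sqrt_ratCast_sq {d : ℚ} (hd : 0 ≤ d) :
    ((Real.sqrt d : ℝ) : ℂ) ^ 2 = d := by
  rw [← Complex.ofReal_pow, Real.sq_sqrt (Rat.cast_nonneg.2 hd), Complex.ofReal_ratCast]

theorem exists_real_embedding_adjoin_nestedSqrt {d p q : ℚ} (hd : 0 ≤ d) {α α' : ℝ}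
    (hα : α = (p : ℝ) + (q : ℝ) * Real.sqrt d) (hα' : α' = (p : ℝ) - (q : ℝ) * Real.sqrt d)
    {θ : ℂ} (hθ : θ ^ 2 = (α : ℂ)) {K : IntermediateField ℚ ℂ}
    (hK : K = adjoin ℚ ({((Real.sqrt d : ℝ) : ℂ), θ} : Set ℂ)) (hdeg : finrank ℚ K = 4)
    (hneg : ¬(α < 0 ∧ α' < 0)) : ∃ ρ : K →+* ℂ, ∀ a, (ρ a).im = 0 := by
  by_cases hα0 : 0 ≤ α
  · have hθreal : θ.im = 0 := (Complex.im_eq_zero_iff_of_sq_eq_ofReal hθ).2 hα0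
    refine ⟨K.val.toRingHom, fun a =>
      Complex.im_eq_zero_of_mem_adjoin ?_ (by rw [← hK]; exact a.2)⟩
    rintro z (rfl | rfl)
    exacts [Complex.ofReal_im _, hθreal]
  have hα'0 : 0 ≤ α' := le_of_not_gt fun h => hneg ⟨lt_of_not_ge hα0, h⟩
  have hq : q ≠ 0 := by
    rintro rfl
    simp only [Rat.cast_zero, zero_mul, add_zero, sub_zero] at hα hα'
    exact hα0 (hα ▸ hα' ▸ hα'0)
  have hsqrtd := Complex.ofReal_sqrt_ratCast_sq hd
  have hKθ : K = ℚ⟮θ⟯ := by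
    rw [hK]
    refine adjoin_pair_eq_adjoin_simple (p := p) hq ?_
    rw [hθ, hα]
    simp
  obtain ⟨φ⟩ := nonempty_algHom_adjoin_of_aeval_eq_zero (L := ℝ) (nestedSqrtPoly_monic p q d)
    (by rw [aeval_nestedSqrtPoly hsqrtd, hθ, hα]; push_cast; ring)
    (by rw [nestedSqrtPoly_natDegree, ← hKθ, hdeg])
    (r := Real.sqrt α')
    (by rw [aeval_nestedSqrtPoly (Real.sq_sqrt (Rat.cast_nonneg.2 hd)), Real.sq_sqrt hα'0, hα']
        ring)
  exact ⟨Complex.ofRealHom.comp (φ.toRingHom.comp (equivOfEq hKθ).toRingHom),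
    fun a => Complex.ofReal_im _⟩

theorem stmt15_general (d : ℚ) (hd : 0 < d)
    (p q : ℚ) (α α' : ℝ)
    (hα : α = (p : ℝ) + (q : ℝ) * Real.sqrt d)
    (hα' : α' = (p : ℝ) - (q : ℝ) * Real.sqrt d)
    (θ : ℂ) (hθ : θ ^ 2 = (α : ℂ))
    (K : IntermediateField ℚ ℂ)
    (hK : K = IntermediateField.adjoin ℚ ({((Real.sqrt d : ℝ) : ℂ), θ} : Set ℂ))
    (hdeg : Module.finrank ℚ K = 4) :
    (∀ ρ : K →+* ℂ, ∃ a : K, (ρ a).im ≠ 0) ↔ (α < 0 ∧ α' < 0) := by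
  constructor
  · intro h
    by_contra hneg
    obtain ⟨ρ, hρ⟩ := exists_real_embedding_adjoin_nestedSqrt hd.le hα hα' hθ hK hdeg hneg
    obtain ⟨a, ha⟩ := h ρ
    exact ha (hρ a)
  · rintro ⟨hαneg, hα'neg⟩ ρ
    have hsqrtd := Complex.ofReal_sqrt_ratCast_sq hd.le
    let s : K := ⟨_, hK ▸ subset_adjoin ℚ _ (Set.mem_insert _ _)⟩
    let t : K := ⟨θ, hK ▸ subset_adjoin ℚ _ (Set.mem_insert_of_mem _ rfl)⟩
    have hs : s ^ 2 = d := Subtype.ext (by simpa using hsqrtd)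
    have ht : t ^ 2 = p + q * s := Subtype.ext (by simp [t, s, hθ, hα])
    have hρt : ρ t ^ 2 = (α : ℂ) ∨ ρ t ^ 2 = (α' : ℂ) := by
      rw [hα, hα']; push_cast; exact ρ.map_sq_eq_or_of_sq_eq hsqrtd hs ht
    refine ⟨t, fun hreal => ?_⟩
    rcases hρt with h | h
    · exact ((Complex.im_eq_zero_iff_of_sq_eq_ofReal h).1 hreal).not_gt hαneg
    · exact ((Complex.im_eq_zero_iff_of_sq_eq_ofReal h).1 hreal).not_gt hα'neg

/-- Let `d` be a positive rational that is not the square of a rational,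
fix the real square root `√d > 0`, and let `p, q ∈ ℚ`.  Set `α = p + q√d` and
`α' = p − q√d`, and assume `α` is not the square of an element of the real quadratic
field `ℚ(√d) ⊂ ℝ`.  Let `θ ∈ ℂ` satisfy `θ² = α` and let `K = ℚ(√d, θ) ⊂ ℂ`, a
degree-4 extension of `ℚ`.  Then `K` is totally imaginary iff `α < 0` and `α' < 0`. -/
theorem stmt15 (d : ℚ) (hd : 0 < d) (hdsq : ¬∃ r : ℚ, r ^ 2 = d)
    (p q : ℚ) (α α' : ℝ)
    (hα : α = (p : ℝ) + (q : ℝ) * Real.sqrt d)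
    (hα' : α' = (p : ℝ) - (q : ℝ) * Real.sqrt d)
    (hnotsq : ¬∃ y ∈ IntermediateField.adjoin ℚ ({Real.sqrt d} : Set ℝ), y ^ 2 = α)
    (θ : ℂ) (hθ : θ ^ 2 = (α : ℂ))
    (K : IntermediateField ℚ ℂ)
    (hK : K = IntermediateField.adjoin ℚ ({((Real.sqrt d : ℝ) : ℂ), θ} : Set ℂ))
    (hdeg : Module.finrank ℚ K = 4) :
    (∀ ρ : K →+* ℂ, ∃ a : K, (ρ a).im ≠ 0) ↔ (α < 0 ∧ α' < 0) :=
  stmt15_general d hd p q α α' hα hα' θ hθ K hK hdeg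
end

section
/- Let ζ = exp(2πi/8) ∈ ℂ and K = ℚ(ζ) ⊂ ℂ, the 8th cyclotomic field. Let φ₁ : K → ℂ be the inclusion and φ₅ : K → ℂ the unique ring embedding with φ₅(ζ) = ζ⁵. Then the subfield of ℂ generated over ℚ by the set {φ₁(x) + φ₅(x) : x ∈ K} equals ℚ(i), the quadratic imaginary field generated by i = ζ². -/
/-!
Since `ζ² = i`, the embedding `φ₅` sends `ζ` to `ζ⁵ = -ζ`. Writing `x = p(ζ)` with `p ∈ ℚ[X]`
gives `x + φ₅ x = p(ζ) + p(-ζ)`, where the odd powers of `ζ` cancel, so this is a polynomial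
in `ζ² = i`. Conversely `ζ² + φ₅(ζ²) = 2i`.
-/

open Polynomial IntermediateField

theorem Polynomial.aeval_add_aeval_neg_mem_adjoin_sq {R A : Type*} [CommRing R] [CommRing A]
    [Algebra R A] (p : R[X]) (z : A) :
    aeval z p + aeval (-z) p ∈ Algebra.adjoin R {z ^ 2} := by
  induction p using Polynomial.induction_on' with
  | add p q hp hq => simpa only [map_add, add_add_add_comm] using add_mem hp hq
  | monomial n a =>
    rw [aeval_monomial, aeval_monomial, ← mul_add]
    refine Subalgebra.mul_mem _ (Subalgebra.algebraMap_mem _ a) ?_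
    rcases n.even_or_odd with ⟨k, rfl⟩ | hn
    · have hpow : (z ^ 2) ^ k ∈ Algebra.adjoin R {z ^ 2} :=
        Subalgebra.pow_mem _ (Algebra.self_mem_adjoin_singleton R _) k
      rw [← pow_mul, two_mul] at hpow
      rw [Even.neg_pow ⟨k, rfl⟩]
      exact Subalgebra.add_mem _ hpow hpow
    · rw [hn.neg_pow, add_neg_cancel]
      exact Subalgebra.zero_mem _

theorem IntermediateField.add_apply_mem_adjoin_sq_of_apply_gen_eq_neg {F E : Type*} [Field F]
    [Field E] [Algebra F E] {α : E} (hα : IsAlgebraic F α) (φ : F⟮α⟯ →ₐ[F] E)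
    (hφ : φ (AdjoinSimple.gen F α) = -α) (x : F⟮α⟯) :
    (x : E) + φ x ∈ Algebra.adjoin F {α ^ 2} := by
  have hxα : (x : E) ∈ Algebra.adjoin F {α} := by
    rw [← adjoin_simple_toSubalgebra_of_isAlgebraic hα]
    exact x.2
  obtain ⟨p, hp⟩ := Algebra.adjoin_mem_exists_aeval F α hxα
  have hx : x = aeval (AdjoinSimple.gen F α) p :=
    Subtype.ext (by rw [AdjoinSimple.coe_aeval_gen_apply, hp])
  rw [hx, ← aeval_algHom_apply, hφ, AdjoinSimple.coe_aeval_gen_apply]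
  exact p.aeval_add_aeval_neg_mem_adjoin_sq α

theorem Complex.exp_two_pi_I_div_eight_sq : exp (2 * Real.pi * I / 8) ^ 2 = I := by
  rw [← exp_nat_mul]
  convert exp_pi_div_two_mul_I using 2
  push_cast
  ring

/-- Let `ζ = exp(2πi/8)` and `K = ℚ(ζ) ⊂ ℂ`, the 8th cyclotomic field.
Let `φ₁ : K → ℂ` be the inclusion and `φ₅ : K → ℂ` the ring embedding with
`φ₅(ζ) = ζ⁵`.  Then the subfield of `ℂ` generated over `ℚ` by
`{φ₁(x) + φ₅(x) : x ∈ K}` equals `ℚ(i)`, the quadratic imaginary field generated by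
`i = ζ²`. -/
theorem stmt16 (ζ : ℂ) (hζ : ζ = Complex.exp (2 * Real.pi * Complex.I / 8))
    (K : IntermediateField ℚ ℂ) (hK : K = IntermediateField.adjoin ℚ ({ζ} : Set ℂ))
    (hζK : ζ ∈ K)
    (φ₅ : K →+* ℂ) (hφ₅ : φ₅ ⟨ζ, hζK⟩ = ζ ^ 5) :
    IntermediateField.adjoin ℚ {z : ℂ | ∃ x : K, z = (x : ℂ) + φ₅ x} =
      IntermediateField.adjoin ℚ ({Complex.I} : Set ℂ) := by
  have hζ2 : ζ ^ 2 = Complex.I := hζ ▸ Complex.exp_two_pi_I_div_eight_sq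
  have hζ5 : ζ ^ 5 = -ζ := by
    linear_combination ζ * (ζ ^ 2 + Complex.I) * hζ2 + ζ * Complex.I_sq
  have hζ_alg : IsAlgebraic ℚ ζ := by
    have h8 : IsPrimitiveRoot ζ 8 := by
      simpa [hζ] using Complex.isPrimitiveRoot_exp 8 (by norm_num)
    exact ((h8.isIntegral (by norm_num)).tower_top (A := ℚ)).isAlgebraic
  apply le_antisymm
  · subst hK
    rw [adjoin_le_iff]
    rintro _ ⟨x, rfl⟩
    have hgen : φ₅.toRatAlgHom (AdjoinSimple.gen ℚ ζ) = -ζ := hφ₅.trans hζ5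
    exact algebra_adjoin_le_adjoin ℚ _
      (hζ2 ▸ add_apply_mem_adjoin_sq_of_apply_gen_eq_neg hζ_alg _ hgen x)
  · rw [adjoin_simple_le_iff]
    have h2I : ζ ^ 2 + φ₅ (⟨ζ, hζK⟩ ^ 2) = 2 * Complex.I := by
      rw [map_pow, hφ₅, hζ5, neg_sq, hζ2, two_mul]
    have hmem : 2 * Complex.I ∈ adjoin ℚ {z : ℂ | ∃ x : K, z = (x : ℂ) + φ₅ x} :=
      subset_adjoin ℚ _ ⟨⟨ζ, hζK⟩ ^ 2, h2I.symm⟩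
    convert smul_mem _ hmem (x := (2⁻¹ : ℚ)) using 1
    rw [Rat.smul_def]
    push_cast
    ring
end

section
/- Let ζ = exp(2πi/10) ∈ ℂ and K = ℚ(ζ) ⊂ ℂ, the 10th cyclotomic field. Let φ₁ : K → ℂ be the inclusion and φ₇ : K → ℂ the unique ring embedding with φ₇(ζ) = ζ⁷. Then the subfield of ℂ generated over ℚ by the set {φ₁(x) + φ₇(x) : x ∈ K} equals K = ℚ(ζ) itself, a degree-4 extension of ℚ. -/
/-!
Every embedding of the normal field `ℚ(ζ)` into `ℂ` lands in `ℚ(ζ)`, so the field generated by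
the values `x + φ₇ x` lies in `ℚ(ζ)`. Conversely, with `a = ζ + ζ⁷` and `b = ζ³ + ζ²¹`, the relations
`ζ⁵ = -1` and `ζ⁴ - ζ³ + ζ² - ζ + 1 = 0` give `2ζ = a² + b + 1`. The degree is `φ(10) = 4`.
-/

open IntermediateField Polynomial

theorem IsPrimitiveRoot.two_mul_eq_of_ten {R : Type*} [CommRing R] [IsDomain R] {ζ : R}
    (hζ : IsPrimitiveRoot ζ 10) :
    2 * ζ = (ζ + ζ ^ 7) ^ 2 + (ζ ^ 3 + (ζ ^ 3) ^ 7) + 1 := by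
  have h5 : ζ ^ 5 = -1 :=
    (hζ.pow (by norm_num) (by norm_num : 10 = 5 * 2)).eq_neg_one_of_two_right
  have hne : ζ + 1 ≠ 0 := fun h => hζ.pow_ne_one_of_pos_of_lt (l := 2) (by norm_num) (by norm_num)
    (by rw [eq_neg_of_add_eq_zero_left h]; ring)
  have hcyc : ζ ^ 4 - ζ ^ 3 + ζ ^ 2 - ζ + 1 = 0 :=
    (mul_eq_zero.1 (by linear_combination h5 :
      (ζ + 1) * (ζ ^ 4 - ζ ^ 3 + ζ ^ 2 - ζ + 1) = 0)).resolve_left hne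
  have h7 : ζ ^ 7 = -ζ ^ 2 := by linear_combination ζ ^ 2 * h5
  have h21 : (ζ ^ 3) ^ 7 = ζ := by
    rw [← pow_mul, show 3 * 7 = 5 * 4 + 1 from rfl, pow_succ, pow_mul, h5]
    ring
  rw [h7, h21]
  linear_combination -hcyc

theorem IsPrimitiveRoot.isGalois_adjoin_simple {K L : Type*} [Field K] [Field L] [Algebra K L]
    {n : ℕ} [NeZero n] {ζ : L} (hζ : IsPrimitiveRoot ζ n) : IsGalois K K⟮ζ⟯ := by
  have : IsCyclotomicExtension {n} K K⟮ζ⟯.toSubalgebra := by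
    rw [adjoin_simple_toSubalgebra_of_isAlgebraic
      ((hζ.isIntegral (NeZero.pos n)).tower_top (A := K)).isAlgebraic]
    exact hζ.adjoin_isCyclotomicExtension K
  exact IsCyclotomicExtension.isGalois {n} K K⟮ζ⟯

theorem IsPrimitiveRoot.finrank_adjoin_rat {L : Type*} [Field L] [CharZero L] {n : ℕ} {ζ : L}
    (hζ : IsPrimitiveRoot ζ n) (hn : 0 < n) : Module.finrank ℚ ℚ⟮ζ⟯ = n.totient := by
  rw [adjoin.finrank ((hζ.isIntegral hn).tower_top), ← cyclotomic_eq_minpoly_rat hζ hn,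
    natDegree_cyclotomic]

theorem IntermediateField.adjoin_add_algHom_le_of_normal {F L : Type*} [Field F] [Field L]
    [Algebra F L] (K : IntermediateField F L) [Normal F K] (σ : K →ₐ[F] L) :
    adjoin F {z : L | ∃ x : K, z = x + σ x} ≤ K :=
  adjoin_le_iff.2 fun _ ⟨x, hx⟩ =>
    hx ▸ add_mem x.2 ((AlgHom.fieldRange_of_normal σ).le ⟨x, rfl⟩)

/-- Let `ζ = exp(2πi/10)` and `K = ℚ(ζ) ⊂ ℂ`, the 10th cyclotomic field.
Let `φ₁ : K → ℂ` be the inclusion and `φ₇ : K → ℂ` the ring embedding with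
`φ₇(ζ) = ζ⁷`.  Then the subfield of `ℂ` generated over `ℚ` by
`{φ₁(x) + φ₇(x) : x ∈ K}` equals `K = ℚ(ζ)` itself, a degree-4 extension of `ℚ`. -/
theorem stmt18 (ζ : ℂ) (hζ : ζ = Complex.exp (2 * Real.pi * Complex.I / 10))
    (K : IntermediateField ℚ ℂ) (hK : K = IntermediateField.adjoin ℚ ({ζ} : Set ℂ))
    (hζK : ζ ∈ K)
    (φ₇ : K →+* ℂ) (hφ₇ : φ₇ ⟨ζ, hζK⟩ = ζ ^ 7) :
    IntermediateField.adjoin ℚ {z : ℂ | ∃ x : K, z = (x : ℂ) + φ₇ x} = K ∧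
      Module.finrank ℚ K = 4 := by
  subst hK
  have hprim : IsPrimitiveRoot ζ 10 := by
    subst hζ
    convert Complex.isPrimitiveRoot_exp 10 (by norm_num) using 3
    norm_num
  have := hprim.isGalois_adjoin_simple (K := ℚ)
  set E := adjoin ℚ {z : ℂ | ∃ x : ℚ⟮ζ⟯, z = x + φ₇ x}
  have hsum (x : ℚ⟮ζ⟯) : (x : ℂ) + φ₇ x ∈ E := subset_adjoin _ _ ⟨x, rfl⟩
  have hζE : ζ ∈ E := by
    have ha := hsum ⟨ζ, hζK⟩
    have hb := hsum (⟨ζ, hζK⟩ ^ 3)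
    rw [hφ₇] at ha
    rw [map_pow, hφ₇, ← pow_mul, mul_comm, pow_mul] at hb
    rw [← mul_div_cancel_left₀ ζ two_ne_zero, hprim.two_mul_eq_of_ten]
    exact div_mem (add_mem (add_mem (pow_mem ha 2) hb) (one_mem E)) (ofNat_mem E 2)
  refine ⟨le_antisymm (adjoin_add_algHom_le_of_normal _ φ₇.toRatAlgHom)
    (adjoin_simple_le_iff.2 hζE), ?_⟩
  rw [hprim.finrank_adjoin_rat (by norm_num)]
  decide
end
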